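/- arXiv:2111.02721 — 6 statements merged into one kernel-verified Lean document; each statement's English description precedes it below -/
import Mathlib

section
/- For each fixed p ∈ (1, ∞), the function ν ↦ k(ν,p) is monotone nondecreasing on [1/2, ∞). Moreover, the function ν ↦ k(ν,∞) is monotone nondecreasing on [1/2, ∞). -/
open Real Set Filter

/-- The radial exponent `k(ν,p)` for `p ∈ (1,∞)`, with the value at `ν = 1/2`
interpreted as the limit `(p-1)/p`. -/
noncomputable def kExp (ν p : ℝ) : ℝ :=
  if ν = 1/2 then (p - 1) / p
  else ((ν - 1) * Real.sqrt ((1 - 2*ν) * (p - 2)^2 + ν^2 * p^2)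
        + (2 - p) * (1 - 2*ν) + ν^2 * p) / (2 * (p - 1) * (2*ν - 1))

/-- The radial exponent `k(ν,∞)`. -/
noncomputable def kInf (ν : ℝ) : ℝ := if ν ≤ 1 then 1 else ν^2 / (2*ν - 1)

/-- Helper square root in a cleaner form. -/
noncomputable def kS (p ν : ℝ) : ℝ := Real.sqrt (4*(p-1)*ν^2 + (p-2)^2*(1-ν)^2)

lemma kS_nonneg (p ν : ℝ) : 0 ≤ kS p ν := Real.sqrt_nonneg _

lemma kS_sq {p : ℝ} (hp : 1 < p) (ν : ℝ) :
    (kS p ν)^2 = 4*(p-1)*ν^2 + (p-2)^2*(1-ν)^2 :=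
  Real.sq_sqrt (by nlinarith [sq_nonneg ν, sq_nonneg ((p-2)*(1-ν))])

lemma abs_le_kS {p : ℝ} (hp : 1 < p) (ν : ℝ) : |(p-2)*(1-ν)| ≤ kS p ν := by
  rw [← Real.sqrt_sq_eq_abs]
  exact Real.sqrt_le_sqrt (by nlinarith [sq_nonneg ν])

lemma sqrtA_eq_kS {p : ℝ} (ν : ℝ) :
    Real.sqrt ((1 - 2*ν) * (p - 2)^2 + ν^2 * p^2) = kS p ν := by
  unfold kS; congr 1; ring

/-- Positivity of the rationalized denominator on `[1/2, 1]`. -/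
lemma E_pos {p ν : ℝ} (hp : 1 < p) (h1 : 1/2 ≤ ν) (h2 : ν ≤ 1) :
    0 < (p-2)*(2*ν-1) + ν^2*p + (1-ν)*kS p ν := by
  have h1' : -((p-2)*(1-ν)) ≤ kS p ν := (neg_le_abs _).trans (abs_le_kS hp ν)
  have hmul := mul_le_mul_of_nonneg_left h1' (by linarith : (0:ℝ) ≤ 1 - ν)
  have hν2 : (0:ℝ) < ν^2 := by nlinarith
  rcases le_total p 2 with hp2 | hp2
  · nlinarith [hmul, sq_nonneg (ν-1), mul_pos (show (0:ℝ) < p-1 by linarith) hν2,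
      mul_nonneg (show (0:ℝ) ≤ 2-p by linarith) (sq_nonneg (ν-1))]
  · nlinarith [hmul, hν2, mul_nonneg (show (0:ℝ) ≤ p-2 by linarith)
      (show (0:ℝ) ≤ 4*ν-2 by linarith)]

/-- Representation of `kExp` on `[1/2, 1]`. -/
lemma kExp_eq_low {p ν : ℝ} (hp : 1 < p) (h1 : 1/2 ≤ ν) (h2 : ν ≤ 1) :
    kExp ν p = 2*(p-1)*ν^2 / ((p-2)*(2*ν-1) + ν^2*p + (1-ν)*kS p ν) := by
  have hE := E_pos hp h1 h2
  rcases eq_or_lt_of_le h1 with h | h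
  · -- ν = 1/2
    have hν : ν = 1/2 := h.symm
    subst hν
    rw [kExp, if_pos rfl]
    have hS : kS p (1/2) = p/2 := by
      unfold kS
      rw [show 4*(p-1)*(1/2:ℝ)^2 + (p-2)^2*(1-1/2)^2 = (p/2)^2 by ring]
      exact Real.sqrt_sq (by linarith)
    rw [hS] at hE ⊢
    rw [div_eq_div_iff (show (p:ℝ) ≠ 0 by linarith) hE.ne']
    ring
  · -- ν > 1/2
    have hν : ν ≠ 1/2 := by intro hc; rw [hc] at h; norm_num at h
    rw [kExp, if_neg hν, sqrtA_eq_kS]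
    have hden : (0:ℝ) < 2 * (p - 1) * (2*ν - 1) := by nlinarith
    rw [div_eq_div_iff hden.ne' hE.ne']
    have hs := kS_sq hp ν
    linear_combination (-(ν - 1)^2) * hs

/-- Representation of `kExp` on `[1, ∞)`. -/
lemma kExp_eq_high {p ν : ℝ} (hp : 1 < p) (h2 : 1 ≤ ν) :
    kExp ν p = ((p-2)*(2*ν-1) + ν^2*p + (ν-1)*kS p ν) / (2*(p-1)*(2*ν-1)) := by
  have hν : ν ≠ 1/2 := by intro hc; rw [hc] at h2; norm_num at h2
  rw [kExp, if_neg hν, sqrtA_eq_kS]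
  congr 1; ring

lemma kExp_low_le_one {p ν : ℝ} (hp : 1 < p) (h1 : 1/2 ≤ ν) (h2 : ν ≤ 1) :
    kExp ν p ≤ 1 := by
  rw [kExp_eq_low hp h1 h2]
  have hE := E_pos hp h1 h2
  rw [div_le_one hE]
  have h2' : (p-2)*(1-ν) ≤ kS p ν := le_of_abs_le (abs_le_kS hp ν)
  nlinarith [mul_le_mul_of_nonneg_left h2' (by linarith : (0:ℝ) ≤ 1 - ν)]

lemma one_le_kExp_high {p ν : ℝ} (hp : 1 < p) (h2 : 1 ≤ ν) :
    1 ≤ kExp ν p := by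
  rw [kExp_eq_high hp h2]
  have hden : (0:ℝ) < 2*(p-1)*(2*ν-1) := by nlinarith
  rw [le_div_iff₀ hden]
  have h1' : -((p-2)*(1-ν)) ≤ kS p ν := (neg_le_abs _).trans (abs_le_kS hp ν)
  nlinarith [mul_le_mul_of_nonneg_left h1' (by linarith : (0:ℝ) ≤ ν - 1), sq_nonneg (ν-1)]

set_option maxHeartbeats 1000000 in
/-- Monotonicity on `[1/2, 1]`. -/
lemma kExp_mono_low {p a b : ℝ} (hp : 1 < p) (ha : 1/2 ≤ a) (hb : b ≤ 1)
    (hab : a ≤ b) : kExp a p ≤ kExp b p := by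
  have ha1 : a ≤ 1 := hab.trans hb
  have hb2 : 1/2 ≤ b := ha.trans hab
  rw [kExp_eq_low hp ha ha1, kExp_eq_low hp hb2 hb]
  have hs1 := kS_sq hp a
  have hs2 := kS_sq hp b
  have hs1n := kS_nonneg p a
  have hs2n := kS_nonneg p b
  have haS : (0:ℝ) < a^2 := by nlinarith
  have hbS : (0:ℝ) < b^2 := by nlinarith
  have he1 : 0 < kS p a + (p-2)*(1-a) := by
    have h := le_of_abs_le (abs_le_kS hp a)
    nlinarith [h, hs1, mul_pos (show (0:ℝ) < p-1 by linarith) haS]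
  have he2 : 0 < kS p b + (p-2)*(1-b) := by
    have h := le_of_abs_le (abs_le_kS hp b)
    nlinarith [h, hs2, mul_pos (show (0:ℝ) < p-1 by linarith) hbS]
  have hE1 := E_pos hp ha ha1
  have hE2 := E_pos hp hb2 hb
  rw [div_le_div_iff₀ hE1 hE2]
  set s1 := kS p a
  set s2 := kS p b
  -- key inequality: (1-b)*s1 ≤ (1-a)*s2
  have hK : (1-b)*s1 ≤ (1-a)*s2 := by
    have h1 : 0 ≤ (1-b)*s1 := mul_nonneg (by linarith) hs1n
    have h2 : 0 ≤ (1-a)*s2 := mul_nonneg (by linarith) hs2n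
    have e0 : (0:ℝ) ≤ (1-a)*b + (1-b)*a :=
      add_nonneg (mul_nonneg (by linarith) (by linarith))
        (mul_nonneg (by linarith) (by linarith))
    have e1 : (0:ℝ) ≤ 4*(p-1)*((b-a)*((1-a)*b + (1-b)*a)) :=
      mul_nonneg (by linarith) (mul_nonneg (by linarith) e0)
    have f1 : ((1-b)*s1)^2 = (1-b)^2*(4*(p-1)*a^2 + (p-2)^2*(1-a)^2) := by
      rw [mul_pow, hs1]
    have f2 : ((1-a)*s2)^2 = (1-a)^2*(4*(p-1)*b^2 + (p-2)^2*(1-b)^2) := by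
      rw [mul_pow, hs2]
    have hsq : ((1-b)*s1)^2 ≤ ((1-a)*s2)^2 := by
      rw [f1, f2]; nlinarith [e1]
    have := Real.sqrt_le_sqrt hsq
    rwa [Real.sqrt_sq h1, Real.sqrt_sq h2] at this
  -- key polynomial identity after rationalization
  have key : (b^2*((p-2)*(2*a-1) + a^2*p + (1-a)*s1)
      - a^2*((p-2)*(2*b-1) + b^2*p + (1-b)*s2))
      * ((s1 + (p-2)*(1-a))*(s2 + (p-2)*(1-b)))
      = 4*(p-1)*a^2*b^2*((1-a)*s2 - (1-b)*s1) := by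
    linear_combination (b^2*(1-a)*(s2 + (p-2)*(1-b)))*hs1
      - (a^2*(1-b)*(s1 + (p-2)*(1-a)))*hs2
  have hfin : 0 ≤ (b^2*((p-2)*(2*a-1) + a^2*p + (1-a)*s1)
      - a^2*((p-2)*(2*b-1) + b^2*p + (1-b)*s2))
      * ((s1 + (p-2)*(1-a))*(s2 + (p-2)*(1-b))) := by
    rw [key]
    have h4 : (0:ℝ) ≤ 4*(p-1)*a^2*b^2 :=
      mul_nonneg (mul_nonneg (by linarith) (sq_nonneg a)) (sq_nonneg b)
    exact mul_nonneg h4 (by linarith)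
  have hC : 0 < (s1 + (p-2)*(1-a))*(s2 + (p-2)*(1-b)) := mul_pos he1 he2
  have hX : 0 ≤ b^2*((p-2)*(2*a-1) + a^2*p + (1-a)*s1)
      - a^2*((p-2)*(2*b-1) + b^2*p + (1-b)*s2) :=
    le_of_mul_le_mul_right (by linarith [hfin]) hC
  have hmain : a^2*((p-2)*(2*b-1) + b^2*p + (1-b)*s2)
      ≤ b^2*((p-2)*(2*a-1) + a^2*p + (1-a)*s1) := by linarith
  have hmain' := mul_le_mul_of_nonneg_left hmain
    (show (0:ℝ) ≤ 2*(p-1) by linarith)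
  linarith [hmain']

set_option maxHeartbeats 1000000 in
/-- Monotonicity on `[1, ∞)`. -/
lemma kExp_mono_high {p a b : ℝ} (hp : 1 < p) (ha : 1 ≤ a)
    (hab : a ≤ b) : kExp a p ≤ kExp b p := by
  have hb : 1 ≤ b := ha.trans hab
  rw [kExp_eq_high hp ha, kExp_eq_high hp hb]
  have hs1n := kS_nonneg p a
  have hd1 : (0:ℝ) < 2*(p-1)*(2*a-1) := by nlinarith
  have hd2 : (0:ℝ) < 2*(p-1)*(2*b-1) := by nlinarith
  rw [div_le_div_iff₀ hd1 hd2]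
  set s1 := kS p a
  set s2 := kS p b
  have hsq1 : a^2 ≤ b^2 := by nlinarith
  have hsq2 : (a-1)^2 ≤ (b-1)^2 := by nlinarith
  have hrad : 4*(p-1)*a^2 + (p-2)^2*(1-a)^2 ≤ 4*(p-1)*b^2 + (p-2)^2*(1-b)^2 := by
    nlinarith [mul_le_mul_of_nonneg_left hsq1 (by linarith : (0:ℝ) ≤ 4*(p-1)),
      mul_le_mul_of_nonneg_left hsq2 (sq_nonneg (p-2))]
  have h2 : s1 ≤ s2 := Real.sqrt_le_sqrt hrad
  have h1 : (a-1)*(2*b-1) ≤ (b-1)*(2*a-1) := by nlinarith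
  have h3' : a^2*(2*b-1) ≤ b^2*(2*a-1) := by
    nlinarith [mul_nonneg (by linarith : (0:ℝ) ≤ b-a)
      (by nlinarith : (0:ℝ) ≤ 2*a*b - a - b)]
  have h3 : p*(a^2*(2*b-1)) ≤ p*(b^2*(2*a-1)) :=
    mul_le_mul_of_nonneg_left h3' (by linarith)
  have h4 : (a-1)*(2*b-1)*s1 ≤ (b-1)*(2*a-1)*s2 := by
    calc (a-1)*(2*b-1)*s1 ≤ (b-1)*(2*a-1)*s1 :=
          mul_le_mul_of_nonneg_right h1 hs1n
      _ ≤ (b-1)*(2*a-1)*s2 :=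
          mul_le_mul_of_nonneg_left h2 (by nlinarith)
  have h3'' := mul_le_mul_of_nonneg_left h3 (show (0:ℝ) ≤ 2*(p-1) by linarith)
  have h4'' := mul_le_mul_of_nonneg_left h4 (show (0:ℝ) ≤ 2*(p-1) by linarith)
  linarith [h3'', h4'']

theorem statement_2 :
    (∀ p : ℝ, 1 < p → MonotoneOn (fun ν => kExp ν p) (Set.Ici (1/2 : ℝ))) ∧
    MonotoneOn kInf (Set.Ici (1/2 : ℝ)) := by
  constructor
  · intro p hp a ha b hb hab
    simp only [Set.mem_Ici] at ha hb
    show kExp a p ≤ kExp b p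
    rcases le_or_gt b 1 with hb1 | hb1
    · exact kExp_mono_low hp ha hb1 hab
    · rcases le_or_gt a 1 with ha1 | ha1
      · exact (kExp_low_le_one hp ha ha1).trans (one_le_kExp_high hp hb1.le)
      · exact kExp_mono_high hp ha1.le hab
  · intro a ha b hb hab
    simp only [Set.mem_Ici] at ha hb
    unfold kInf
    by_cases h1 : a ≤ 1
    · by_cases h2 : b ≤ 1
      · simp [h1, h2]
      · simp only [if_pos h1, if_neg h2]
        push_neg at h2
        rw [le_div_iff₀ (by linarith)]
        nlinarith [sq_nonneg (b-1)]
    · have h2 : ¬ b ≤ 1 := fun h => h1 (hab.trans h)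
      simp only [if_neg h1, if_neg h2]
      push_neg at h1 h2
      rw [div_le_div_iff₀ (by linarith) (by linarith)]
      nlinarith [mul_nonneg (by linarith : (0:ℝ) ≤ b-a)
        (by nlinarith : (0:ℝ) ≤ 2*a*b - a - b)]
end

section
/- For each fixed ν ∈ [1/2, 1), the function p ↦ k(ν,p) is strictly increasing on (1, ∞); for ν = 1, k(1,p) = 1 for every p ∈ (1, ∞); and for each fixed ν ∈ (1, ∞), the function p ↦ k(ν,p) is strictly decreasing on (1, ∞). -/
open Real Set Filter

lemma kExp_pos_aux (ν p s w : ℝ) (hν : 1/2 < ν) (hν1 : ν ≠ 1) (hp : 1 < p)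
    (hs2 : s^2 = (1 - 2*ν) * (p - 2)^2 + ν^2 * p^2) (hspos : 0 < s)
    (hw : w * (2*s) = (1 - 2*ν) * (2*(p-2)) + ν^2 * (2*p)) :
    0 < (1 - ν) *
      ((((ν - 1) * w + (-(1 - 2*ν)) + ν^2) * (2 * (p - 1) * (2*ν - 1))
        - ((ν - 1) * s + (2 - p) * (1 - 2*ν) + ν^2 * p) * (2 * (2*ν - 1)))
        / (2 * (p - 1) * (2*ν - 1))^2) := by
  have h2ν : (0:ℝ) < 2*ν - 1 := by linarith
  have hp1 : (0:ℝ) < p - 1 := by linarith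
  have hν2 : (0:ℝ) < (ν - 1)^2 := sq_pos_of_ne_zero (sub_ne_zero.mpr hν1)
  set M : ℝ := (ν - 1)^2 * p + 2*(2*ν - 1)*(p - 1) with hM
  have hM2 : M^2 = (ν - 1)^2 * s^2 + 4*(2*ν - 1)*(p - 1)^2*ν^2 := by
    rw [hs2]; ring
  have hMpos : 0 < M := by nlinarith
  have hMs : 0 < M + (ν - 1) * s := by
    nlinarith [mul_pos h2ν (mul_pos (mul_pos hp1 hp1) (by nlinarith : (0:ℝ) < ν^2))]
  set A : ℝ := (((ν - 1) * w + (-(1 - 2*ν)) + ν^2) * (2 * (p - 1) * (2*ν - 1))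
        - ((ν - 1) * s + (2 - p) * (1 - 2*ν) + ν^2 * p) * (2 * (2*ν - 1))) with hA
  have hAs : (1 - ν) * A * s = (ν - 1)^2 * (2*(2*ν - 1)) * (M + (ν - 1)*s) := by
    rw [hA, hM]
    linear_combination ((1-ν)*(ν-1)*(2*(p-1)*(2*ν-1))/2) * hw + ((1-ν)^2*(2*(2*ν-1))) * hs2
  have hApos : 0 < (1 - ν) * A := by
    have hr : 0 < (ν - 1)^2 * (2*(2*ν - 1)) * (M + (ν - 1)*s) :=
      mul_pos (mul_pos hν2 (by linarith)) hMs
    nlinarith [hAs, hr, hspos]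
  have heq : (1 - ν) * (A / (2 * (p - 1) * (2*ν - 1))^2)
      = ((1 - ν) * A) / (2 * (p - 1) * (2*ν - 1))^2 := by ring
  rw [heq]
  exact div_pos hApos (by positivity)

lemma kExp_hasDeriv (ν p : ℝ) (hν : 1/2 < ν) (hp : 1 < p) :
    HasDerivAt (fun q => kExp ν q)
      ((((ν - 1) * (((1 - 2*ν) * (2*(p-2)) + ν^2 * (2*p)) / (2*Real.sqrt ((1 - 2*ν) * (p - 2)^2 + ν^2 * p^2))) + (-(1 - 2*ν)) + ν^2)
          * (2 * (p - 1) * (2*ν - 1))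
        - ((ν - 1) * Real.sqrt ((1 - 2*ν) * (p - 2)^2 + ν^2 * p^2) + (2 - p) * (1 - 2*ν) + ν^2 * p) * (2 * (2*ν - 1)))
        / (2 * (p - 1) * (2*ν - 1))^2) p := by
  have hne : ν ≠ 1/2 := ne_of_gt hν
  have h2ν : (0:ℝ) < 2*ν - 1 := by linarith
  have hp1 : (0:ℝ) < p - 1 := by linarith
  have hupos : 0 < (1 - 2*ν) * (p - 2)^2 + ν^2 * p^2 := by
    nlinarith [sq_nonneg ((ν - 1) * p), mul_pos h2ν hp1]
  have hfun : (fun q => kExp ν q) = fun q =>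
      ((ν - 1) * Real.sqrt ((1 - 2*ν) * (q - 2)^2 + ν^2 * q^2)
        + (2 - q) * (1 - 2*ν) + ν^2 * q) / (2 * (q - 1) * (2*ν - 1)) := by
    funext q; unfold kExp; rw [if_neg hne]
  rw [hfun]
  have hu' : HasDerivAt (fun q : ℝ => (1 - 2*ν) * (q - 2)^2 + ν^2 * q^2)
      ((1 - 2*ν) * (2*(p-2)) + ν^2 * (2*p)) p := by
    have h1 : HasDerivAt (fun q : ℝ => (q - 2)^2) (2*(p-2)) p := by
      simpa using ((hasDerivAt_id p).sub_const 2).fun_pow 2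
    have h2 : HasDerivAt (fun q : ℝ => q^2) (2*p) p := by
      simpa using hasDerivAt_pow 2 p
    exact (h1.const_mul _).add (h2.const_mul _)
  have hsq := hu'.sqrt hupos.ne'
  have hb : HasDerivAt (fun q : ℝ => (2 - q) * (1 - 2*ν)) (-(1 - 2*ν)) p := by
    simpa using ((hasDerivAt_id p).const_sub 2).mul_const (1 - 2*ν)
  have hc : HasDerivAt (fun q : ℝ => ν^2 * q) (ν^2) p := by
    simpa using (hasDerivAt_id p).const_mul (ν^2)
  have hnum := ((hsq.const_mul (ν - 1)).add hb).add hc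
  have hden : HasDerivAt (fun q : ℝ => 2 * (q - 1) * (2*ν - 1)) (2 * (2*ν - 1)) p := by
    simpa using (((hasDerivAt_id p).sub_const 1).const_mul 2).mul_const (2*ν - 1)
  have hgne : 2 * (p - 1) * (2*ν - 1) ≠ 0 := ne_of_gt (by nlinarith)
  exact hnum.div hden hgne

lemma kExp_deriv_sign (ν p : ℝ) (hν : 1/2 < ν) (hν1 : ν ≠ 1) (hp : 1 < p) :
    0 < (1 - ν) *
      ((((ν - 1) * (((1 - 2*ν) * (2*(p-2)) + ν^2 * (2*p)) / (2*Real.sqrt ((1 - 2*ν) * (p - 2)^2 + ν^2 * p^2))) + (-(1 - 2*ν)) + ν^2)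
          * (2 * (p - 1) * (2*ν - 1))
        - ((ν - 1) * Real.sqrt ((1 - 2*ν) * (p - 2)^2 + ν^2 * p^2) + (2 - p) * (1 - 2*ν) + ν^2 * p) * (2 * (2*ν - 1)))
        / (2 * (p - 1) * (2*ν - 1))^2) := by
  have hupos : 0 < (1 - 2*ν) * (p - 2)^2 + ν^2 * p^2 := by
    nlinarith [sq_nonneg ((ν - 1) * p),
      mul_pos (by linarith : (0:ℝ) < 2*ν - 1) (by linarith : (0:ℝ) < p - 1)]
  have hspos : 0 < Real.sqrt ((1 - 2*ν) * (p - 2)^2 + ν^2 * p^2) := Real.sqrt_pos.mpr hupos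
  exact kExp_pos_aux ν p _ _ hν hν1 hp (Real.sq_sqrt hupos.le) hspos
    (div_mul_cancel₀ _ (by positivity))

theorem statement_3 :
    (∀ ν : ℝ, ν ∈ Set.Ico (1/2 : ℝ) 1 → StrictMonoOn (fun p => kExp ν p) (Set.Ioi (1 : ℝ))) ∧
    (∀ p : ℝ, 1 < p → kExp 1 p = 1) ∧
    (∀ ν : ℝ, 1 < ν → StrictAntiOn (fun p => kExp ν p) (Set.Ioi (1 : ℝ))) := by
  refine ⟨?_, ?_, ?_⟩
  · intro ν hν
    rcases eq_or_lt_of_le hν.1 with heq | hlt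
    · intro p hp q hq hpq
      simp only [Set.mem_Ioi] at hp hq
      simp only [kExp, if_pos heq.symm]
      rw [div_lt_div_iff₀ (by linarith) (by linarith)]
      nlinarith
    · have hone : ν ≠ 1 := ne_of_lt hν.2
      apply strictMonoOn_of_deriv_pos (convex_Ioi 1)
      · exact fun p hp => ((kExp_hasDeriv ν p hlt hp).continuousAt).continuousWithinAt
      · intro p hp
        rw [interior_Ioi] at hp
        rw [(kExp_hasDeriv ν p hlt hp).deriv]
        have h := kExp_deriv_sign ν p hlt hone hp
        have h1ν : (0:ℝ) < 1 - ν := by linarith [hν.2]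
        nlinarith [h, h1ν]
  · intro p hp
    have h1 : (1:ℝ) ≠ 1/2 := by norm_num
    unfold kExp
    rw [if_neg h1, div_eq_one_iff_eq (ne_of_gt (by nlinarith : (0:ℝ) < 2 * (p - 1) * (2*1 - 1)))]
    ring
  · intro ν hν
    have hlt : 1/2 < ν := by linarith
    have hone : ν ≠ 1 := ne_of_gt hν
    apply strictAntiOn_of_deriv_neg (convex_Ioi 1)
    · exact fun p hp => ((kExp_hasDeriv ν p hlt hp).continuousAt).continuousWithinAt
    · intro p hp
      rw [interior_Ioi] at hp
      rw [(kExp_hasDeriv ν p hlt hp).deriv]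
      have h := kExp_deriv_sign ν p hlt hone hp
      have h1ν : 1 - ν < 0 := by linarith
      nlinarith [h, h1ν]
end

section
/- For every p ∈ (2, ∞) and every ν ∈ [1/2, ∞), setting a = (p−1)/(p−2), one has a·k(ν,p) > 1. -/
open Real Set Filter

theorem statement_8 (p ν : ℝ) (hp : 2 < p) (hν : 1/2 ≤ ν) :
    1 < (p - 1) / (p - 2) * kExp ν p := by
  have hp2 : (0:ℝ) < p - 2 := by linarith
  have hp1 : (0:ℝ) < p - 1 := by linarith
  unfold kExp
  rcases eq_or_lt_of_le hν with h | h
  · rw [if_pos h.symm]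
    rw [div_mul_div_comm, one_lt_div (by positivity)]
    nlinarith
  · have hne : ν ≠ 1/2 := by linarith
    rw [if_neg hne]
    set D := (1 - 2*ν) * (p - 2)^2 + ν^2 * p^2 with hD
    set s := Real.sqrt D with hs
    have hs0 : 0 ≤ s := Real.sqrt_nonneg _
    have hA : 0 < ν^2*p - (p-2)*(2*ν-1) := by nlinarith [sq_nonneg (ν*p - (p-2))]
    have key : (p-2)*(2*ν-1) * 2 < (ν - 1) * s + (2 - p) * (1 - 2*ν) + ν^2 * p := by
      rcases le_or_gt 1 ν with h1 | h1
      · nlinarith [mul_nonneg (sub_nonneg.2 h1) hs0]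
      · have hDpos : 0 ≤ D := by nlinarith
        have hsq : s^2 = D := Real.sq_sqrt hDpos
        have hlt : (1-ν) * s < ν^2*p - (p-2)*(2*ν-1) := by
          by_contra hcon
          push_neg at hcon
          have h2 : (ν^2*p - (p-2)*(2*ν-1))^2 ≤ ((1-ν)*s)^2 := by
            apply sq_le_sq' <;> nlinarith [mul_nonneg (by linarith : (0:ℝ) ≤ 1-ν) hs0]
          nlinarith [h2, hsq, sq_nonneg ν, mul_pos (mul_pos (by linarith : (0:ℝ) < 2*ν-1) (by linarith : (0:ℝ) < ν)) (by linarith : (0:ℝ) < ν)]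
        nlinarith
    rw [div_mul_div_comm, one_lt_div (mul_pos hp2 (mul_pos (by linarith : (0:ℝ) < 2*(p-1)) (by linarith : (0:ℝ) < 2*ν-1)))]
    nlinarith [key, mul_pos hp1 (by linarith : (0:ℝ) < 2*ν-1)]
end

section
/- For every q ∈ (1, ∞) and every ν ∈ [1/2, ∞), one has k(ν,q) ≥ (q−1)/q. -/
open Real Set Filter

theorem statement_9 (q ν : ℝ) (hq : 1 < q) (hν : 1/2 ≤ ν) :
    (q - 1) / q ≤ kExp ν q := by
  rcases eq_or_lt_of_le hν with h | h
  · rw [kExp, if_pos h.symm]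
  · have hq0 : (0:ℝ) < q := by linarith
    rw [kExp, if_neg (by intro hc; rw [hc] at h; linarith)]
    have hD0 : 0 ≤ (1 - 2*ν) * (q - 2)^2 + ν^2 * q^2 := by
      nlinarith [sq_nonneg (ν - 1), sq_nonneg (q - 2), sq_nonneg q]
    set s := Real.sqrt ((1 - 2*ν) * (q - 2)^2 + ν^2 * q^2) with hs
    have hs0 : 0 ≤ s := Real.sqrt_nonneg _
    have hs2 : s^2 = (1 - 2*ν) * (q - 2)^2 + ν^2 * q^2 := Real.sq_sqrt hD0
    have hden : (0:ℝ) < 2 * (q - 1) * (2*ν - 1) := by nlinarith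
    rw [div_le_div_iff₀ hq0 hden]
    have hE0 : 0 ≤ ν^2 * q^2 - (2*ν - 1) * (q^2 - 2*q + 2) := by
      nlinarith [sq_nonneg (ν - 1), sq_nonneg (q - 1)]
    have key : (1 - ν) * q * s ≤ ν^2 * q^2 - (2*ν - 1) * (q^2 - 2*q + 2) := by
      rcases le_or_gt ν 1 with hν1 | hν1
      · have hA0 : 0 ≤ (1 - ν) * q * s := mul_nonneg (mul_nonneg (by linarith) hq0.le) hs0
        have hsq : ((1 - ν) * q * s)^2 ≤ (ν^2 * q^2 - (2*ν - 1) * (q^2 - 2*q + 2))^2 := by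
          nlinarith [hs2, sq_nonneg (2*ν - 1), sq_nonneg (q - 1)]
        nlinarith [hsq, hA0, hE0]
      · nlinarith [mul_nonneg (mul_nonneg (by linarith : (0:ℝ) ≤ ν - 1) hq0.le) hs0]
    nlinarith [key]
end

section
/- Let ν ∈ [1/2, ∞), q ∈ (1, 2), and let p = q/(q−1) ∈ (2, ∞) be the conjugate exponent. Then (p−1)·(k(ν,p) − 1) + 1 = k(ν,q); that is, the stream-function exponent λ = (p−1)(k(ν,p)−1)+1 associated with the p-harmonic radial exponent k(ν,p) equals the q-harmonic radial exponent k(ν,q). -/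
open Real Set Filter

theorem statement_10 (ν q p : ℝ) (hν : 1/2 ≤ ν) (hq1 : 1 < q) (hq2 : q < 2)
    (hp : p = q / (q - 1)) :
    (p - 1) * (kExp ν p - 1) + 1 = kExp ν q := by
  have hq1' : q - 1 > 0 := by linarith
  have hq1'' : q - 1 ≠ 0 := ne_of_gt hq1'
  subst hp
  by_cases hν2 : ν = 1/2
  · subst hν2
    simp only [kExp, if_pos rfl, eq_self_iff_true, if_true]
    have hq0 : q ≠ 0 := by linarith
    have hpne : q / (q - 1) ≠ 0 := div_ne_zero hq0 hq1''
    field_simp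
    ring
  · have hν' : 2*ν - 1 > 0 := by
      rcases lt_or_eq_of_le hν with h | h
      · linarith
      · exact absurd h.symm hν2
    have hν'' : 2*ν - 1 ≠ 0 := ne_of_gt hν'
    simp only [kExp, if_neg hν2]
    have harg : (1 - 2*ν) * (q/(q-1) - 2)^2 + ν^2 * (q/(q-1))^2
        = ((1 - 2*ν) * (q - 2)^2 + ν^2 * q^2) * (1/(q-1))^2 := by
      have h2 : (2:ℝ) = (2*(q-1)) * (1/(q-1)) := by field_simp
      have hq : q/(q-1) = q * (1/(q-1)) := by ring
      rw [hq]
      nth_rewrite 2 [h2]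
      ring
    have hsqrt : Real.sqrt ((1 - 2*ν) * (q/(q-1) - 2)^2 + ν^2 * (q/(q-1))^2)
        = Real.sqrt ((1 - 2*ν) * (q - 2)^2 + ν^2 * q^2) * (1/(q-1)) := by
      rw [harg, Real.sqrt_mul' _ (by positivity), Real.sqrt_sq (by positivity)]
    rw [hsqrt]
    have hpm1 : q/(q-1) - 1 ≠ 0 := by
      have : q/(q-1) - 1 = 1/(q-1) := by field_simp; ring
      rw [this]; positivity
    have hν3 : ν*2 - 1 ≠ 0 := by linarith
    field_simp
    ring
end

section
/- Let p ∈ (2, ∞), ν ∈ [1/2, ∞), a = (p−1)/(p−2) and k = k(ν,p). Then a·k > 1 and 1 − (1 − 1/k)·√(a·k)/√(a·k − 1) = 1/ν; that is, k(ν,p) solves the aperture condition π/ν = π·(1 − (1 − 1/k)·√(ak)/√(ak−1)) that determines the radial exponent of the separable p-harmonic function in the sector of aperture π/ν. -/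
open Real Set Filter

lemma aux_sqrt (a b u v : ℝ) (ha : 0 ≤ a) (hb : 0 ≤ b)
    (h : a^2 * u = b^2 * v) : a * Real.sqrt u = b * Real.sqrt v := by
  rw [← Real.sqrt_sq ha, ← Real.sqrt_sq hb, ← Real.sqrt_mul (sq_nonneg a),
    ← Real.sqrt_mul (sq_nonneg b), h]

set_option maxHeartbeats 1000000 in
theorem statement_11 (p ν : ℝ) (hp : 2 < p) (hν : 1/2 ≤ ν) :
    1 < (p - 1) / (p - 2) * kExp ν p ∧
    1 - (1 - 1 / kExp ν p) * Real.sqrt ((p - 1) / (p - 2) * kExp ν p) /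
        Real.sqrt ((p - 1) / (p - 2) * kExp ν p - 1) = 1 / ν := by
  have hp2 : (0:ℝ) < p - 2 := by linarith
  have hp1 : (0:ℝ) < p - 1 := by linarith
  have hp0 : (0:ℝ) < p := by linarith
  have hν0 : (0:ℝ) < ν := by linarith
  set k := kExp ν p with hkdef
  obtain ⟨hQ, hk0, hkp, hlt, hge⟩ :
      ((p-1)*(2*ν-1)*k^2 - ((2-p)*(1-2*ν)+ν^2*p)*k + (p-1)*ν^2 = 0) ∧ 0 < k ∧
        p - 2 < (p-1)*k ∧ (ν ≤ 1 → k ≤ 1) ∧ (1 ≤ ν → 1 ≤ k) := by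
    by_cases hhalf : ν = 1/2
    · have hk : k = (p-1)/p := by rw [hkdef, kExp, if_pos hhalf]
      subst hhalf
      refine ⟨?_, ?_, ?_, fun _ => ?_, fun h => absurd h (by norm_num)⟩
      · rw [hk]; field_simp; ring
      · rw [hk]; positivity
      · rw [hk]
        have h1 : (p-1)*((p-1)/p) - (p-2) = 1/p := by field_simp; ring
        have h2 : (0:ℝ) < 1/p := by positivity
        linarith
      · rw [hk, div_le_one hp0]; linarith
    · have h2ν : (0:ℝ) < 2*ν - 1 := lt_of_le_of_ne (by linarith) (by
        intro h; exact hhalf (by linarith))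
      set s := Real.sqrt ((1 - 2*ν) * (p - 2)^2 + ν^2 * p^2) with hsdef
      have hR : (0:ℝ) < (1 - 2*ν) * (p - 2)^2 + ν^2 * p^2 := by nlinarith [sq_nonneg (ν*p - (p-2)), sq_nonneg (p-2), sq_nonneg ν]
      have hs2 : s^2 = (1 - 2*ν) * (p - 2)^2 + ν^2 * p^2 := Real.sq_sqrt hR.le
      have hs0 : 0 ≤ s := Real.sqrt_nonneg _
      have hk2A : 2*((p-1)*(2*ν-1))*k = (ν-1)*s + ((2-p)*(1-2*ν)+ν^2*p) := by
        rw [hkdef, kExp, if_neg hhalf, ← hsdef]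
        field_simp
        ring
      have hs0' : 0 < s := Real.sqrt_pos.mpr hR
      have key1 : ∀ x D : ℝ, 0 < D → x^2 < D^2 → -D < x := by
        intro x D hD h; nlinarith [sq_nonneg (x+D)]
      have hD : (0:ℝ) < (2-p)*(1-2*ν)+ν^2*p := by nlinarith [sq_nonneg ν, sq_nonneg (ν-1/2)]
      -- quadratic equation
      have h1 : (2*((p-1)*(2*ν-1))*k - ((2-p)*(1-2*ν)+ν^2*p))^2 = (ν-1)^2 * s^2 := by
        rw [show 2*((p-1)*(2*ν-1))*k - ((2-p)*(1-2*ν)+ν^2*p) = (ν-1)*s from by linarith]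
        ring
      have hQ4 : 4*((p-1)*(2*ν-1))*((p-1)*(2*ν-1)*k^2 - ((2-p)*(1-2*ν)+ν^2*p)*k + (p-1)*ν^2) = 0 := by
        linear_combination h1 + (ν-1)^2 * hs2
      have hQ : (p-1)*(2*ν-1)*k^2 - ((2-p)*(1-2*ν)+ν^2*p)*k + (p-1)*ν^2 = 0 := by
        have h40 : (0:ℝ) < 4*((p-1)*(2*ν-1)) := by positivity
        rcases mul_eq_zero.mp hQ4 with h | h
        · exact absurd h h40.ne'
        · exact h
      -- positivity of k
      have haux : (0:ℝ) < 4*(p-1)^2*(2*ν-1)*ν^2 := by positivity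
      have hxD : ((ν-1)*s)^2 < ((2-p)*(1-2*ν)+ν^2*p)^2 := by
        have hDR : ((ν-1)*s)^2 = ((2-p)*(1-2*ν)+ν^2*p)^2 - 4*(p-1)^2*(2*ν-1)*ν^2 := by
          linear_combination (ν-1)^2 * hs2
        linarith
      have hnum := key1 _ _ hD hxD
      have hk0 : 0 < k := by
        have h2Ak : 0 < 2*((p-1)*(2*ν-1))*k := by rw [hk2A]; linarith
        exact lt_of_mul_lt_mul_left (a := 2*((p-1)*(2*ν-1))) (b := 0)
          (by simpa using h2Ak) (by positivity)
      -- p - 2 < (p-1)*k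
      have hE : (0:ℝ) < p*(ν-1)^2+2*(2*ν-1) := by positivity
      have hxE : ((ν-1)*s)^2 < (p*(ν-1)^2+2*(2*ν-1))^2 := by
        have hER : ((ν-1)*s)^2 = (p*(ν-1)^2+2*(2*ν-1))^2 - 4*ν^2*(2*ν-1) := by
          linear_combination (ν-1)^2 * hs2
        have hc : (0:ℝ) < 4*ν^2*(2*ν-1) := by positivity
        linarith
      have hnumE := key1 _ _ hE hxE
      have hkp : p - 2 < (p-1)*k := by
        have h2Ak : 2*(2*ν-1)*(p-2) < 2*(2*ν-1)*((p-1)*k) := by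
          have e : 2*(2*ν-1)*((p-1)*k) = (ν-1)*s + ((2-p)*(1-2*ν)+ν^2*p) := by
            linear_combination hk2A
          rw [e]; linarith [hnumE]
        exact lt_of_mul_lt_mul_left h2Ak (by positivity)
      -- sign of k - 1
      have hsp : 0 < s + p*(ν-1) := by
        have hs2' : (p*(ν-1))^2 < s^2 := by
          have h5 : s^2 = (p*(ν-1))^2 + 4*(p-1)*(2*ν-1) := by linear_combination hs2
          linarith [mul_pos hp1 h2ν]
        have := key1 _ _ hs0' hs2'
        linarith
      have hk1 : 2*((p-1)*(2*ν-1))*(k-1) = (ν-1)*(s + p*(ν-1)) := by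
        linear_combination hk2A
      refine ⟨hQ, hk0, hkp, fun h => ?_, fun h => ?_⟩
      · have hnn : (ν-1)*(s + p*(ν-1)) ≤ 0 :=
          mul_nonpos_of_nonpos_of_nonneg (by linarith) hsp.le
        have h3 : 2*((p-1)*(2*ν-1))*(k-1) ≤ 0 := by rw [hk1]; exact hnn
        by_contra hcon
        push_neg at hcon
        have h4 : 0 < 2*((p-1)*(2*ν-1))*(k-1) :=
          mul_pos (by positivity) (by linarith)
        linarith
      · have hnn : 0 ≤ (ν-1)*(s + p*(ν-1)) :=
          mul_nonneg (by linarith) hsp.le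
        have h3 : 0 ≤ 2*((p-1)*(2*ν-1))*(k-1) := by rw [hk1]; exact hnn
        by_contra hcon
        push_neg at hcon
        have h4 : 2*((p-1)*(2*ν-1))*(k-1) < 0 :=
          mul_neg_of_pos_of_neg (by positivity) (by linarith)
        linarith
  -- common part
  have ht1 : 1 < (p - 1) / (p - 2) * k := by
    rw [div_mul_eq_mul_div, lt_div_iff₀ hp2]
    linarith
  refine ⟨ht1, ?_⟩
  set t := (p - 1) / (p - 2) * k with htdef
  have ht0 : 0 < t - 1 := by linarith
  have hst : 0 < Real.sqrt (t - 1) := Real.sqrt_pos.mpr ht0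
  have hk0' : k ≠ 0 := hk0.ne'
  have hsq : ((1 - 1/k)*ν)^2 * t = (ν-1)^2 * (t-1) := by
    rw [htdef]
    field_simp
    linear_combination hQ
  have key : (1 - 1/k)*ν*Real.sqrt t = (ν-1)*Real.sqrt (t-1) := by
    rcases le_or_gt ν 1 with h1 | h1
    · have hk1 : k ≤ 1 := hlt h1
      have ha : 0 ≤ (1/k - 1)*ν := by
        have : 1 ≤ 1/k := by rw [le_div_iff₀ hk0]; linarith
        have h0 : 0 ≤ 1/k - 1 := by linarith
        positivity
      have hb : (0:ℝ) ≤ 1 - ν := by linarith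
      have h := aux_sqrt ((1/k - 1)*ν) (1-ν) t (t-1) ha hb (by linear_combination hsq)
      linear_combination -h
    · have hk1 : 1 ≤ k := hge h1.le
      have ha : 0 ≤ (1 - 1/k)*ν := by
        have : 1/k ≤ 1 := by rw [div_le_one hk0]; exact hk1
        have h0 : 0 ≤ 1 - 1/k := by linarith
        positivity
      have hb : (0:ℝ) ≤ ν - 1 := by linarith
      exact aux_sqrt ((1 - 1/k)*ν) (ν-1) t (t-1) ha hb hsq
  have hfrac : (1 - 1/k) * Real.sqrt t / Real.sqrt (t-1) = (ν-1)/ν := by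
    rw [div_eq_div_iff hst.ne' hν0.ne']
    linear_combination key
  rw [hfrac]
  field_simp
  ring
end
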